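/- arXiv:2403.03906 — 7 statements merged into one kernel-verified Lean document; each statement's English description precedes it below -/
import Mathlib

section
/- Let G be a strongly connected finite digraph and let S ⊆ A be a set of 'transferred' arcs such that every vertex v is 'locally acceptable': either all in-arcs of v lie in S, or no out-arc of v lies in S. If some arc of G lies in S, then every arc of G lies in S. -/
/-! Local acceptability says that an arc of `S` leaving `v` forces every arc entering `v` into `S`.
Hence membership in `S` propagates backwards along arcs: starting from the tail of one arc of `S`,
and walking back from it to the head of an arbitrary arc, strong connectivity puts every arc in `S`. -/

/-- The list of arcs (consecutive pairs) of a path given as a list of vertices. -/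
def arcsOf {V : Type*} (p : List V) : List (V × V) := p.zip p.tail

/-- A directed cycle: a closed directed walk of length ≥ 1 with no repeated arcs. -/
def IsCycle {V : Type*} (A : Finset (V × V)) (p : List V) : Prop :=
  p.Chain' (fun u v => (u, v) ∈ A) ∧ 2 ≤ p.length ∧ p.head? = p.getLast? ∧ (arcsOf p).Nodup

/-- Lengths of simple directed paths from `s` to `t`. -/
def SimplePathLens {V : Type*} (A : Finset (V × V)) (s t : V) : Set ℕ :=
  {n | ∃ p : List V, p.Chain' (fun u v => (u, v) ∈ A) ∧ p.Nodup ∧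
        p.head? = some s ∧ p.getLast? = some t ∧ p.length = n + 1}

section LocallyAcceptable

variable {V : Type*} {A S : Finset (V × V)}

theorem inArcs_mem_of_outArc_mem {v w : V}
    (hacc : (∀ u, (u, v) ∈ A → (u, v) ∈ S) ∨ (∀ w, (v, w) ∈ A → (v, w) ∉ S))
    (hA : (v, w) ∈ A) (hS : (v, w) ∈ S) :
    ∀ u, (u, v) ∈ A → (u, v) ∈ S :=
  hacc.resolve_right fun h => h w hA hS

theorem inArcs_mem_of_reflTransGen
    (hacc : ∀ v : V, (∀ u, (u, v) ∈ A → (u, v) ∈ S) ∨ (∀ w, (v, w) ∈ A → (v, w) ∉ S))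
    {x y : V} (hxy : Relation.ReflTransGen (fun a b => (a, b) ∈ A) x y)
    (hy : ∀ u, (u, y) ∈ A → (u, y) ∈ S) :
    ∀ u, (u, x) ∈ A → (u, x) ∈ S := by
  induction hxy using Relation.ReflTransGen.head_induction_on with
  | refl => exact hy
  | head hab _ ih => exact inArcs_mem_of_outArc_mem (hacc _) hab (ih _ hab)

end LocallyAcceptable

theorem stmt3_general {V : Type*} (A S : Finset (V × V))
    (hsc : ∀ u v : V, Relation.ReflTransGen (fun a b => (a, b) ∈ A) u v)
    (hacc : ∀ v : V, (∀ u, (u, v) ∈ A → (u, v) ∈ S) ∨ (∀ w, (v, w) ∈ A → (v, w) ∉ S))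
    (hne : ∃ a ∈ A, a ∈ S) :
    ∀ a ∈ A, a ∈ S := by
  obtain ⟨⟨v₀, w₀⟩, hA₀, hS₀⟩ := hne
  have hv₀ := inArcs_mem_of_outArc_mem (hacc v₀) hA₀ hS₀
  rintro ⟨u, v⟩ huv
  exact inArcs_mem_of_reflTransGen hacc (hsc v v₀) hv₀ u huv

/-- In a strongly connected digraph, if every vertex is locally acceptable with respect
to the set S of transferred arcs, then S is all-or-nothing. -/
theorem stmt3 {V : Type*} [Fintype V] (A S : Finset (V × V)) (hSA : S ⊆ A)
    (hsc : ∀ u v : V, Relation.ReflTransGen (fun a b => (a, b) ∈ A) u v)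
    (hacc : ∀ v : V, (∀ u, (u, v) ∈ A → (u, v) ∈ S) ∨ (∀ w, (v, w) ∈ A → (v, w) ∉ S))
    (hne : ∃ a ∈ A, a ∈ S) :
    ∀ a ∈ A, a ∈ S :=
  stmt3_general A S hsc hacc hne
end

section
/- Let G be a strongly connected finite digraph, C ⊆ V a set of vertices, and S ⊆ A a set of transferred arcs. Suppose every vertex outside C is locally acceptable with respect to S (all of its in-arcs are in S or none of its out-arcs are in S). If all in-arcs of C (arcs from V∖C into C) are in S, then all out-arcs of C (arcs from C to V∖C) are also in S. -/
/-!
If an out-arc `(u, v)` of `C` were not transferred, acceptability of `v` would leave no out-arc of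
`v` transferred. This propagates along arcs: an untransferred arc cannot enter `C`, since every
in-arc of `C` is transferred, and acceptability of its head applies again. By strong connectivity
it reaches `u ∈ C`, a contradiction.
-/

section SilentOutside

variable {V : Type*} (A S : Finset (V × V)) (C : Set V)

def LocallyAcceptable (v : V) : Prop :=
  (∀ u, (u, v) ∈ A → (u, v) ∈ S) ∨ (∀ w, (v, w) ∈ A → (v, w) ∉ S)

def SilentOutside (z : V) : Prop :=
  z ∉ C ∧ ∀ w, (z, w) ∈ A → (z, w) ∉ S

variable {A S C}

theorem silentOutside_of_not_transferred {b c : V} (hc : LocallyAcceptable A S c)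
    (hbc : (b, c) ∈ A) (hcC : c ∉ C) (hnS : (b, c) ∉ S) :
    SilentOutside A S C c :=
  ⟨hcC, hc.resolve_left fun h => hnS (h b hbc)⟩

theorem SilentOutside.of_arc
    (hacc : ∀ v, v ∉ C → LocallyAcceptable A S v)
    (hin : ∀ u v : V, (u, v) ∈ A → u ∉ C → v ∈ C → (u, v) ∈ S)
    {b c : V} (hb : SilentOutside A S C b) (hbc : (b, c) ∈ A) :
    SilentOutside A S C c :=
  have hcC : c ∉ C := fun hcC => hb.2 c hbc (hin b c hbc hb.1 hcC)
  silentOutside_of_not_transferred (hacc c hcC) hbc hcC (hb.2 c hbc)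

theorem SilentOutside.of_reflTransGen
    (hacc : ∀ v, v ∉ C → LocallyAcceptable A S v)
    (hin : ∀ u v : V, (u, v) ∈ A → u ∉ C → v ∈ C → (u, v) ∈ S)
    {v z : V} (hv : SilentOutside A S C v)
    (hvz : Relation.ReflTransGen (fun a b => (a, b) ∈ A) v z) :
    SilentOutside A S C z := by
  induction hvz with
  | refl => exact hv
  | tail _ hbc ih => exact ih.of_arc hacc hin hbc

end SilentOutside

theorem stmt4_general {V : Type*} (A S : Finset (V × V)) (C : Set V)
    (hsc : ∀ u v : V, Relation.ReflTransGen (fun a b => (a, b) ∈ A) u v)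
    (hacc : ∀ v : V, v ∉ C →
      (∀ u, (u, v) ∈ A → (u, v) ∈ S) ∨ (∀ w, (v, w) ∈ A → (v, w) ∉ S))
    (hin : ∀ u v : V, (u, v) ∈ A → u ∉ C → v ∈ C → (u, v) ∈ S) :
    ∀ u v : V, (u, v) ∈ A → u ∈ C → v ∉ C → (u, v) ∈ S := by
  intro u v huv huC hvC
  by_contra hnS
  have hv : SilentOutside A S C v := silentOutside_of_not_transferred (hacc v hvC) huv hvC hnS
  exact (hv.of_reflTransGen hacc hin (hsc v u)).1 huC

/-- Coalition case 1 (no Discount): if every vertex outside C is locally acceptable and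
all in-arcs of C are transferred, then all out-arcs of C are transferred. -/
theorem stmt4 {V : Type*} [Fintype V] (A S : Finset (V × V)) (hSA : S ⊆ A) (C : Set V)
    (hsc : ∀ u v : V, Relation.ReflTransGen (fun a b => (a, b) ∈ A) u v)
    (hacc : ∀ v : V, v ∉ C →
      (∀ u, (u, v) ∈ A → (u, v) ∈ S) ∨ (∀ w, (v, w) ∈ A → (v, w) ∉ S))
    (hin : ∀ u v : V, (u, v) ∈ A → u ∉ C → v ∈ C → (u, v) ∈ S) :
    ∀ u v : V, (u, v) ∈ A → u ∈ C → v ∉ C → (u, v) ∈ S :=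
  stmt4_general A S C hsc hacc hin
end

section
/- Let G be a strongly connected finite digraph, C ⊆ V, and S ⊆ A. Suppose every vertex outside C is locally acceptable with respect to S. If no out-arc of C is in S, then no in-arc of C is in S. -/
section Coalition

variable {V : Type*} (A S : Finset (V × V)) (C : Set V)

def IsActiveOutside (x : V) : Prop :=
  x ∉ C ∧ ∃ w, (x, w) ∈ A ∧ (x, w) ∈ S

variable {A S C}

theorem isActiveOutside_of_arc
    (hacc : ∀ v : V, v ∉ C →
      (∀ u, (u, v) ∈ A → (u, v) ∈ S) ∨ (∀ w, (v, w) ∈ A → (v, w) ∉ S))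
    (hout : ∀ u v : V, (u, v) ∈ A → u ∈ C → v ∉ C → (u, v) ∉ S)
    {b c : V} (hbc : (b, c) ∈ A) (hc : IsActiveOutside A S C c) :
    IsActiveOutside A S C b := by
  obtain ⟨hcC, w, hcw, hcwS⟩ := hc
  have hbcS : (b, c) ∈ S := by
    rcases hacc c hcC with hin | hnone
    · exact hin b hbc
    · exact absurd hcwS (hnone w hcw)
  exact ⟨fun hbC => hout b c hbc hbC hcC hbcS, c, hbc, hbcS⟩

theorem isActiveOutside_of_reflTransGen
    (hacc : ∀ v : V, v ∉ C →
      (∀ u, (u, v) ∈ A → (u, v) ∈ S) ∨ (∀ w, (v, w) ∈ A → (v, w) ∉ S))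
    (hout : ∀ u v : V, (u, v) ∈ A → u ∈ C → v ∉ C → (u, v) ∉ S)
    {x y : V} (hxy : Relation.ReflTransGen (fun a b => (a, b) ∈ A) x y)
    (hy : IsActiveOutside A S C y) :
    IsActiveOutside A S C x := by
  induction hxy using Relation.ReflTransGen.head_induction_on with
  | refl => exact hy
  | head hac _ hc => exact isActiveOutside_of_arc hacc hout hac hc

end Coalition

theorem stmt5_general {V : Type*} (A S : Finset (V × V)) (C : Set V)
    (hsc : ∀ u v : V, Relation.ReflTransGen (fun a b => (a, b) ∈ A) u v)
    (hacc : ∀ v : V, v ∉ C →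
      (∀ u, (u, v) ∈ A → (u, v) ∈ S) ∨ (∀ w, (v, w) ∈ A → (v, w) ∉ S))
    (hout : ∀ u v : V, (u, v) ∈ A → u ∈ C → v ∉ C → (u, v) ∉ S) :
    ∀ u v : V, (u, v) ∈ A → u ∉ C → v ∈ C → (u, v) ∉ S := by
  intro u v huv hu hv huvS
  have hactive_u : IsActiveOutside A S C u := ⟨hu, v, huv, huvS⟩
  exact (isActiveOutside_of_reflTransGen hacc hout (hsc v u) hactive_u).1 hv

/-- Coalition case 2 (no FreeRide): if every vertex outside C is locally acceptable and
no out-arc of C is transferred, then no in-arc of C is transferred. -/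
theorem stmt5 {V : Type*} [Fintype V] (A S : Finset (V × V)) (hSA : S ⊆ A) (C : Set V)
    (hsc : ∀ u v : V, Relation.ReflTransGen (fun a b => (a, b) ∈ A) u v)
    (hacc : ∀ v : V, v ∉ C →
      (∀ u, (u, v) ∈ A → (u, v) ∈ S) ∨ (∀ w, (v, w) ∈ A → (v, w) ∉ S))
    (hout : ∀ u v : V, (u, v) ∈ A → u ∈ C → v ∉ C → (u, v) ∉ S) :
    ∀ u v : V, (u, v) ∈ A → u ∉ C → v ∈ C → (u, v) ∉ S :=
  stmt5_general A S C hsc hacc hout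
end

section
/- Let G be a finite digraph with bottleneck vertex ℓ, and let D* be the maximum length of a simple cycle in G. Define d⁻(v) = maximum length of a simple path from v to ℓ (d⁻(ℓ)=0). Then for every arc (u,v) with u ≠ ℓ, we have d⁻(u) ≥ d⁻(v) + 1; moreover max over out-neighbors z of ℓ of (d⁻(z)+1) = D*. -/
/-- Lengths of simple directed cycles: lists with head = last, no repeated vertices
except the endpoints, and n ≥ 1 arcs. -/
def SimpleCycleLens {V : Type*} (A : Finset (V × V)) : Set ℕ :=
  {n | ∃ p : List V, p.Chain' (fun u v => (u, v) ∈ A) ∧ p.head? = p.getLast? ∧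
        p.dropLast.Nodup ∧ p.length = n + 1 ∧ 1 ≤ n}

lemma List.exists_isRotated_cons_of_mem {α : Type*} {c : List α} {a : α} (h : a ∈ c) :
    ∃ r, c ~r a :: r := by
  obtain ⟨s, t, rfl⟩ := List.append_of_mem h
  exact ⟨t ++ s, by simpa using List.isRotated_append (l := s) (l' := a :: t)⟩

section

variable {V : Type*} {A : Finset (V × V)}

lemma map_fst_arcsOf : ∀ p : List V, (arcsOf p).map Prod.fst = p.dropLast
  | [] => rfl
  | [_] => rfl
  | a :: b :: t => congrArg (a :: ·) (map_fst_arcsOf (b :: t))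

lemma nodup_arcsOf {p : List V} (h : p.dropLast.Nodup) : (arcsOf p).Nodup :=
  .of_map Prod.fst (by rwa [map_fst_arcsOf])

def IsBottleneck (A : Finset (V × V)) (l : V) : Prop :=
  ∀ p : List V, IsCycle A p → l ∈ p

def IsSimplePath (A : Finset (V × V)) (p : List V) (s t : V) : Prop :=
  p.IsChain (fun u v => (u, v) ∈ A) ∧ p.Nodup ∧ p.head? = some s ∧ p.getLast? = some t

lemma mem_simplePathLens {n : ℕ} {s t : V} :
    n ∈ SimplePathLens A s t ↔ ∃ p, IsSimplePath A p s t ∧ p.length = n + 1 := by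
  simp only [SimplePathLens, IsSimplePath, and_assoc]
  rfl

namespace IsSimplePath

lemma cons {p : List V} {u v t : V} (hp : IsSimplePath A p v t) (huv : (u, v) ∈ A)
    (hu : u ∉ p) : IsSimplePath A (u :: p) u t := by
  obtain ⟨hc, hn, hh, hl⟩ := hp
  refine ⟨List.isChain_cons.2 ⟨by simpa [hh] using huv, hc⟩, List.nodup_cons.2 ⟨hu, hn⟩, rfl, ?_⟩
  simp [List.getLast?_cons, hl]

lemma truncate {s t : List V} {u v w : V} (hp : IsSimplePath A (s ++ u :: t) v w) :
    IsSimplePath A (s ++ [u]) v u := by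
  obtain ⟨hc, hn, hh, -⟩ := hp
  rw [← List.singleton_append, ← List.append_assoc] at hc hn
  refine ⟨(List.isChain_append.1 hc).1, (List.nodup_append.1 hn).1, ?_, by simp⟩
  cases s <;> simpa using hh

lemma eq_singleton {p : List V} {v : V} (hp : IsSimplePath A p v v) : p = [v] := by
  obtain ⟨-, hn, hh, hl⟩ := hp
  obtain ⟨ys, rfl⟩ := List.getLast?_eq_some_iff.1 hl
  cases ys with
  | nil => rfl
  | cons y ys =>
    simp only [List.cons_append, List.head?_cons, Option.some.injEq] at hh
    subst hh
    simp at hn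

lemma isCycle_concat {q : List V} {u v : V} (hq : IsSimplePath A q v u) (huv : (u, v) ∈ A) :
    IsCycle A (q ++ [v]) := by
  obtain ⟨hc, hn, hh, hl⟩ := hq
  have hq : q ≠ [] := by rintro rfl; simp at hh
  refine ⟨List.isChain_append.2 ⟨hc, List.isChain_singleton v, ?_⟩, ?_, ?_, ?_⟩
  · simpa [hl] using huv
  · have := List.length_pos_iff.2 hq
    simp only [List.length_append, List.length_singleton]
    omega
  · simp [List.head?_append, hh]
  · exact nodup_arcsOf (by rwa [List.dropLast_concat])

end IsSimplePath

lemma simplePathLens_self (v : V) : SimplePathLens A v v = {0} := by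
  ext n
  simp only [mem_simplePathLens, Set.mem_singleton_iff]
  constructor
  · rintro ⟨p, hp, hlen⟩
    simpa [hp.eq_singleton] using hlen
  · rintro rfl
    exact ⟨[v], ⟨List.isChain_singleton v, List.nodup_singleton v, rfl, rfl⟩, rfl⟩

lemma IsBottleneck.mem_of_isSimplePath {l : V} (hbot : IsBottleneck A l) {q : List V} {u v : V}
    (hq : IsSimplePath A q v u) (huv : (u, v) ∈ A) : l ∈ q := by
  have hv : v ∈ q := List.mem_of_mem_head? hq.2.2.1
  have := hbot _ (hq.isCycle_concat huv)
  simp only [List.mem_append, List.mem_singleton] at this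
  rcases this with h | rfl
  exacts [h, hv]

lemma IsBottleneck.not_mem_of_isSimplePath {l : V} (hbot : IsBottleneck A l) {p : List V} {u v : V}
    (hp : IsSimplePath A p v l) (huv : (u, v) ∈ A) (hu : u ≠ l) : u ∉ p := by
  intro hmem
  obtain ⟨s, t, rfl⟩ := List.append_of_mem hmem
  have hls : l ∈ s := by
    simpa [Ne.symm hu] using hbot.mem_of_isSimplePath hp.truncate huv
  have hlt : l ∈ u :: t := by
    apply List.mem_of_getLast?
    simpa [List.getLast?_append] using hp.2.2.2
  exact (List.nodup_append.1 hp.2.1).2.2 l hls l hlt rfl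

lemma add_one_mem_simpleCycleLens {m : ℕ} {z l : V} (hm : m ∈ SimplePathLens A z l)
    (hlz : (l, z) ∈ A) : m + 1 ∈ SimpleCycleLens A := by
  obtain ⟨p, ⟨hc, hn, hh, hl⟩, hlen⟩ := mem_simplePathLens.1 hm
  obtain ⟨ys, rfl⟩ := List.getLast?_eq_some_iff.1 hl
  refine ⟨(l :: ys) ++ [l], List.isChain_cons.2 ⟨by simpa [hh] using hlz, hc⟩,
    (List.getLast?_concat ..).symm, ?_,
    by simpa using hlen, by omega⟩
  rw [List.dropLast_concat]
  simpa using List.nodup_middle.1 hn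

lemma IsBottleneck.exists_mem_simplePathLens_of_mem_simpleCycleLens {l : V}
    (hbot : IsBottleneck A l) {n : ℕ} (hn : n ∈ SimpleCycleLens A) :
    ∃ z m, (l, z) ∈ A ∧ m ∈ SimplePathLens A z l ∧ m + 1 = n := by
  obtain ⟨p, hc, hends, hnd, hlen, hn1⟩ := hn
  have hlp : l ∈ p := hbot p ⟨hc, by omega, hends, nodup_arcsOf hnd⟩
  have hp : p ≠ [] := by rintro rfl; simp at hlen
  obtain ⟨x, hx⟩ : ∃ x, p.head? = some x := ⟨_, List.head?_eq_some_head hp⟩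
  obtain ⟨d, rfl⟩ : ∃ d, p = (x :: d) ++ [x] := by
    obtain ⟨ys, rfl⟩ := List.getLast?_eq_some_iff.1 (hends ▸ hx)
    cases ys with
    | nil => simp only [List.nil_append, List.length_singleton] at hlen; omega
    | cons y d =>
      obtain rfl : y = x := by simpa using hx
      exact ⟨d, rfl⟩
  rw [List.dropLast_concat] at hnd
  obtain ⟨r, hr⟩ := List.exists_isRotated_cons_of_mem (a := l) (c := x :: d)
    (by simp only [List.mem_append, List.mem_cons] at hlp ⊢; tauto)
  have hcyc : Cycle.Chain (fun u v => (u, v) ∈ A) (l :: r) := by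
    rw [← Cycle.coe_eq_coe.2 hr, Cycle.chain_coe_cons]
    exact hc
  rw [Cycle.chain_coe_cons, List.isChain_cons] at hcyc
  obtain ⟨z, hz⟩ : ∃ z, (r ++ [l]).head? = some z := ⟨_, List.head?_eq_some_head (by simp)⟩
  have hpath : IsSimplePath A (r ++ [l]) z l :=
    ⟨hcyc.2, List.nodup_append_comm.1 (hr.nodup_iff.1 hnd), hz, by simp⟩
  refine ⟨z, r.length, hcyc.1 z hz, mem_simplePathLens.2 ⟨r ++ [l], hpath, by simp⟩, ?_⟩
  have := hr.perm.length_eq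
  simp only [List.length_cons, List.length_append, List.length_nil] at this hlen
  omega

end

theorem stmt8_general {V : Type*} (A : Finset (V × V)) (l : V)
    (hbot : ∀ p : List V, IsCycle A p → l ∈ p)
    (Dstar : ℕ) (hD : IsGreatest (SimpleCycleLens A) Dstar)
    (dm : V → ℕ) (hdm0 : dm l = 0)
    (hdm : ∀ v : V, v ≠ l → IsGreatest (SimplePathLens A v l) (dm v)) :
    (∀ u v : V, (u, v) ∈ A → u ≠ l → dm v + 1 ≤ dm u) ∧
      IsGreatest {m | ∃ z : V, (l, z) ∈ A ∧ m = dm z + 1} Dstar := by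
  have hdm' : ∀ v, IsGreatest (SimplePathLens A v l) (dm v) := by
    intro v
    by_cases hv : v = l
    · subst hv
      rw [simplePathLens_self, hdm0]
      exact isGreatest_singleton
    · exact hdm v hv
  refine ⟨fun u v huv hu => ?_, ?_, ?_⟩
  · obtain ⟨p, hp, hlen⟩ := mem_simplePathLens.1 (hdm' v).1
    refine (hdm' u).2 (mem_simplePathLens.2 ⟨u :: p, hp.cons huv ?_, by simp [hlen]⟩)
    exact IsBottleneck.not_mem_of_isSimplePath hbot hp huv hu
  · obtain ⟨z, m, hlz, hm, rfl⟩ := IsBottleneck.exists_mem_simplePathLens_of_mem_simpleCycleLens hbot hD.1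
    refine ⟨z, hlz, le_antisymm (Nat.add_le_add_right ((hdm' z).2 hm) 1) ?_⟩
    exact hD.2 (add_one_mem_simpleCycleLens (hdm' z).1 hlz)
  · rintro _ ⟨z, hlz, rfl⟩
    exact hD.2 (add_one_mem_simpleCycleLens (hdm' z).1 hlz)

/-- In a bottleneck digraph, the max-distance-to-the-bottleneck function decreases along
arcs, and the maximum over out-neighbors of the bottleneck equals the maximum simple
cycle length. -/
theorem stmt8 {V : Type*} [Fintype V] (A : Finset (V × V)) (l : V)
    (hsc : ∀ u v : V, Relation.ReflTransGen (fun a b => (a, b) ∈ A) u v)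
    (hbot : ∀ p : List V, IsCycle A p → l ∈ p)
    (Dstar : ℕ) (hD : IsGreatest (SimpleCycleLens A) Dstar)
    (dm : V → ℕ) (hdm0 : dm l = 0)
    (hdm : ∀ v : V, v ≠ l → IsGreatest (SimplePathLens A v l) (dm v)) :
    (∀ u v : V, (u, v) ∈ A → u ≠ l → dm v + 1 ≤ dm u) ∧
      IsGreatest {m | ∃ z : V, (l, z) ∈ A ∧ m = dm z + 1} Dstar :=
  stmt8_general A l hbot Dstar hD dm hdm0 hdm
end

section
/- Let G be a finite digraph, f : A → V a protector labeling. Suppose for every vertex v and every party x ≠ v: if v has an in-arc protected by x then every arc incident to v not protected by v is protected by x (uniqueness of external protector). Let P = u1,...,uk be a simple directed path whose last arc (u_{k-1}, u_k) is protected by some z ∉ {u_1,...,u_{k-1}}, and suppose each arc on P other than the last is either protected by its own buyer or by the protector of the following arc's constraint. Then: for each i, the arc (u_i, u_{i+1}) is protected by one of u_{i+1}, ..., u_{k-1}, z; consequently no arc of P is protected by its seller. -/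
/-!
Walk backwards along the path. The last arc is protected by `z`. If the arc into `u (i+1)` is not
protected by its buyer `u (i+1)`, then `u (i+1)` has an incoming arc with an external protector,
so the local axiom forces the next arc, which (inductively) is not protected by its seller
`u (i+1)`, to share that protector. Either way the protector of each arc is `z` or a later
vertex, and simplicity of the path together with `z` lying off the path rules out the seller.
-/

def UniqueExternalProtector {V : Type*} (A : Finset (V × V)) (f : V × V → V) : Prop :=
  ∀ v x : V, x ≠ v → (∃ u, (u, v) ∈ A ∧ f (u, v) = x) →
    ∀ a ∈ A, (a.1 = v ∨ a.2 = v) → f a ≠ v → f a = x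

section

variable {V : Type*} {A : Finset (V × V)} {f : V × V → V}

theorem UniqueExternalProtector.protector_out_eq_protector_in (hA : UniqueExternalProtector A f)
    {a v w : V} (hin : (a, v) ∈ A) (hout : (v, w) ∈ A) (hbuyer : f (a, v) ≠ v)
    (hseller : f (v, w) ≠ v) : f (v, w) = f (a, v) :=
  hA v _ hbuyer ⟨a, hin, rfl⟩ (v, w) hout (Or.inl rfl) hseller

def ProtectedDownstream (f : V × V → V) (k : ℕ) (u : ℕ → V) (z : V) (i : ℕ) : Prop :=
  f (u i, u (i + 1)) = z ∨ ∃ j, i < j ∧ j < k ∧ f (u i, u (i + 1)) = u j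

variable {k : ℕ} {u : ℕ → V} {z : V}

theorem ProtectedDownstream.ne_seller (hsimple : ∀ i j, i ≤ k → j ≤ k → u i = u j → i = j)
    (hznotin : ∀ i < k, z ≠ u i) {i : ℕ} (hi : i < k) (h : ProtectedDownstream f k u z i) :
    f (u i, u (i + 1)) ≠ u i := by
  rcases h with hfz | ⟨j, hij, hjk, hfj⟩
  · exact hfz ▸ hznotin i hi
  · rw [hfj]
    exact fun hji => hij.ne' (hsimple j i hjk.le hi.le hji)

theorem protectedDownstream_of_lt (hA : UniqueExternalProtector A f)
    (harcs : ∀ i < k, (u i, u (i + 1)) ∈ A)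
    (hsimple : ∀ i j, i ≤ k → j ≤ k → u i = u j → i = j)
    (hz : f (u (k - 1), u k) = z) (hznotin : ∀ i < k, z ≠ u i) {i : ℕ} (hi : i < k) :
    ProtectedDownstream f k u z i := by
  have hk : 0 < k := by omega
  have hik : i ≤ k - 1 := by omega
  clear hi
  induction hik using Nat.decreasingInduction with
  | self =>
    left
    rwa [Nat.sub_add_cancel hk]
  | of_succ i hi hnext =>
    by_cases hbuyer : f (u i, u (i + 1)) = u (i + 1)
    · exact Or.inr ⟨i + 1, by omega, by omega, hbuyer⟩
    have hshared := hA.protector_out_eq_protector_in (harcs i (by omega))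
      (harcs (i + 1) (by omega)) hbuyer (hnext.ne_seller hsimple hznotin (by omega))
    rw [ProtectedDownstream, ← hshared]
    rcases hnext with hfz | ⟨j, hij, hjk, hfj⟩
    · exact Or.inl hfz
    · exact Or.inr ⟨j, by omega, hjk, hfj⟩

end

theorem stmt9_general {V : Type*} (A : Finset (V × V)) (f : V × V → V)
    (hA2 : ∀ v x : V, x ≠ v → (∃ u, (u, v) ∈ A ∧ f (u, v) = x) →
      ∀ a ∈ A, (a.1 = v ∨ a.2 = v) → f a ≠ v → f a = x)
    (k : ℕ) (u : ℕ → V)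
    (harcs : ∀ i < k, (u i, u (i + 1)) ∈ A)
    (hsimple : ∀ i j, i ≤ k → j ≤ k → u i = u j → i = j)
    (z : V) (hz : f (u (k - 1), u k) = z) (hznotin : ∀ i < k, z ≠ u i) :
    ∀ i < k,
      (f (u i, u (i + 1)) = z ∨ ∃ j, i < j ∧ j < k ∧ f (u i, u (i + 1)) = u j) ∧
        f (u i, u (i + 1)) ≠ u i := by
  intro i hi
  have h := protectedDownstream_of_lt hA2 harcs hsimple hz hznotin hi
  exact ⟨h, h.ne_seller hsimple hznotin hi⟩

/-- Along a simple path whose last arc is protected by a party z not among the earlier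
vertices, every arc is protected by a later internal vertex or z; hence no arc is
protected by its seller. -/
theorem stmt9 {V : Type*} [Fintype V] (A : Finset (V × V)) (f : V × V → V)
    (hA2 : ∀ v x : V, x ≠ v → (∃ u, (u, v) ∈ A ∧ f (u, v) = x) →
      ∀ a ∈ A, (a.1 = v ∨ a.2 = v) → f a ≠ v → f a = x)
    (k : ℕ) (hk : 1 ≤ k) (u : ℕ → V)
    (harcs : ∀ i < k, (u i, u (i + 1)) ∈ A)
    (hsimple : ∀ i j, i ≤ k → j ≤ k → u i = u j → i = j)
    (z : V) (hz : f (u (k - 1), u k) = z) (hznotin : ∀ i < k, z ≠ u i) :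
    ∀ i < k,
      (f (u i, u (i + 1)) = z ∨ ∃ j, i < j ∧ j < k ∧ f (u i, u (i + 1)) = u j) ∧
        f (u i, u (i + 1)) ≠ u i :=
  stmt9_general A f hA2 k u harcs hsimple z hz hznotin
end

section
/- Let G be a finite digraph with protector labeling f satisfying: for every vertex w ≠ v, if w has an in-arc protected by v then w has an out-arc protected by v; and the subgraph of arcs protected by v restricted to V∖{v} is acyclic. Then if vertex v has any out-arc protected by v, there exists a directed path from the head of that arc back to v all of whose arcs are protected by v. -/
/-! Follow `v`-protected arcs forward from `w`, keeping the walk simple. A vertex other than `v`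
reached this way has a protected in-arc, hence a protected out-arc, so the walk can be extended;
stepping back onto the walk would close a cycle of protected arcs avoiding `v`. As `V` is finite,
the walk must reach `v`. -/

lemma arcsOf_map_snd {V : Type*} (p : List V) : (arcsOf p).map Prod.snd = p.tail :=
  List.map_snd_zip (by cases p <;> simp)

lemma nodup_arcsOf_of_nodup_tail {V : Type*} {p : List V} (h : p.tail.Nodup) :
    (arcsOf p).Nodup :=
  .of_map Prod.snd (by rwa [arcsOf_map_snd])

section

variable {V : Type*} {r : V → V → Prop}

-- Walks are kept as `x :: p` listed backwards, `x` being the current end, so that extending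
-- one is a `cons`.
lemma exists_cycle_of_mem_of_isChain_reverse {x y : V} {p : List V}
    (hp : (x :: p).IsChain (fun a b => r b a)) (hnd : (x :: p).Nodup)
    (hxy : r x y) (hy : y ∈ x :: p) :
    ∃ c : List V, (c.IsChain r ∧ 2 ≤ c.length ∧ c.head? = c.getLast? ∧ (arcsOf c).Nodup) ∧
      c ⊆ x :: p := by
  obtain ⟨s, t, hst⟩ := List.append_of_mem hy
  have hpre : s ++ [y] <+: x :: p := hst ▸ ⟨t, by simp⟩
  have hhead : (s ++ [y]).head? = some x := by
    simpa [List.head?_append] using congrArg List.head? hst.symm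
  have hc : (y :: (s ++ [y])).reverse = y :: (y :: s).reverse := by simp
  refine ⟨y :: (y :: s).reverse, ⟨?_, by simp, ?_, ?_⟩, ?_⟩
  · rw [← hc, List.isChain_reverse, List.isChain_cons]
    exact ⟨by simpa [hhead] using hxy, hp.prefix hpre⟩
  · simp [List.getLast?_cons]
  · exact nodup_arcsOf_of_nodup_tail <| List.nodup_reverse.2 <|
      (List.perm_append_singleton y s).nodup_iff.1 (hnd.sublist hpre.sublist)
  · intro z hz
    apply hpre.subset
    simp only [List.reverse_cons, List.mem_cons, List.mem_append, List.mem_reverse,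
      List.not_mem_nil, or_false] at hz ⊢
    tauto

variable {v : V}

theorem exists_isChain_to_of_reverse_walk [Fintype V]
    (hstep : ∀ x, x ≠ v → (∃ u, r u x) → ∃ y, r x y)
    (hacyc : ¬ ∃ c : List V,
      (c.IsChain r ∧ 2 ≤ c.length ∧ c.head? = c.getLast? ∧ (arcsOf c).Nodup) ∧ v ∉ c)
    (x : V) (p : List V) (hp : (x :: p).IsChain (fun a b => r b a)) (hnd : (x :: p).Nodup)
    (hvp : v ∉ p) (hx : ∃ u, r u x) :
    ∃ q : List V, q.head? = some x ∧ q.getLast? = some v ∧ q.IsChain r := by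
  by_cases hxv : x = v
  · exact ⟨[x], rfl, by simp [hxv], .singleton x⟩
  obtain ⟨y, hxy⟩ := hstep x hxv hx
  by_cases hy : y ∈ x :: p
  · obtain ⟨c, hc, hcsub⟩ := exists_cycle_of_mem_of_isChain_reverse hp hnd hxy hy
    refine absurd ⟨c, hc, fun hv => ?_⟩ hacyc
    rcases List.mem_cons.1 (hcsub hv) with h | h
    exacts [hxv h.symm, hvp h]
  · obtain ⟨q, hq, hqv, hqr⟩ := exists_isChain_to_of_reverse_walk hstep hacyc y (x :: p)
      (hp.cons_cons hxy) (List.nodup_cons.2 ⟨hy, hnd⟩) (by simp [hvp, Ne.symm hxv]) ⟨x, hxy⟩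
    obtain ⟨q, rfl⟩ := List.head?_eq_some_iff.1 hq
    exact ⟨x :: y :: q, rfl, by rwa [List.getLast?_cons_cons], hqr.cons_cons hxy⟩
termination_by Fintype.card V - p.length
decreasing_by
  have := hnd.length_le_card
  simp only [List.length_cons] at this ⊢
  omega

end

/-- If v has an out-arc protected by v, then there is a directed path from the head of
that arc back to v all of whose arcs are protected by v. -/
theorem stmt11 {V : Type*} [Fintype V] (A : Finset (V × V)) (f : V × V → V) (v : V)
    (hstep : ∀ w : V, w ≠ v → (∃ u, (u, w) ∈ A ∧ f (u, w) = v) →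
      ∃ y, (w, y) ∈ A ∧ f (w, y) = v)
    (hacyc : ¬ ∃ p : List V,
      (p.Chain' (fun a b => (a, b) ∈ A ∧ f (a, b) = v) ∧ 2 ≤ p.length ∧
        p.head? = p.getLast? ∧ (arcsOf p).Nodup) ∧ v ∉ p)
    (w : V) (hw : (v, w) ∈ A) (hfw : f (v, w) = v) :
    ∃ p : List V, p ≠ [] ∧ p.head? = some w ∧ p.getLast? = some v ∧
      p.Chain' (fun a b => (a, b) ∈ A ∧ f (a, b) = v) := by
  obtain ⟨p, hpw, hpv, hp⟩ := exists_isChain_to_of_reverse_walk hstep hacyc w []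
    (.singleton w) (List.nodup_singleton w) List.not_mem_nil ⟨v, hw, hfw⟩
  exact ⟨p, fun h => by simp [h] at hpw, hpw, hpv, hp⟩
end

section
/- Let G be a finite digraph with protector labeling f satisfying: for every vertex v, if v has an in-arc protected by x ≠ v then every arc incident to v is protected by v or by x. Let (u,v) be an arc protected by x with x ≠ v, and let P be a directed path starting with arc (u,v), not containing x as an internal vertex, on which every arc is not protected by its seller. Then every arc of P is protected by x. -/
/-!
Induction along the path. If the arc `(u, v)` is protected by `x ≠ v`, the hypothesis on `v`
forces the next arc `(v, w)` to be protected by `v` or by `x`; it is not protected by its seller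
`v`, so it is protected by `x`. As long as `x` is not internal, `x ≠ w` again at the next step.
-/

theorem arcsOf_cons_cons {V : Type*} (a b : V) (l : List V) :
    arcsOf (a :: b :: l) = (a, b) :: arcsOf (b :: l) := rfl

theorem protector_next_arc_eq {V : Type*} {A : Finset (V × V)} {f : V × V → V}
    (hA2 : ∀ v x : V, x ≠ v → (∃ u, (u, v) ∈ A ∧ f (u, v) = x) →
      ∀ a ∈ A, (a.1 = v ∨ a.2 = v) → (f a = v ∨ f a = x))
    {x u v w : V} (huv : (u, v) ∈ A) (hvw : (v, w) ∈ A) (hx : f (u, v) = x) (hxv : x ≠ v)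
    (hvw_seller : f (v, w) ≠ v) : f (v, w) = x :=
  (hA2 v x hxv ⟨u, huv, hx⟩ (v, w) hvw (Or.inl rfl)).resolve_left hvw_seller

theorem stmt13_general {V : Type*} (A : Finset (V × V)) (f : V × V → V)
    (hA2 : ∀ v x : V, x ≠ v → (∃ u, (u, v) ∈ A ∧ f (u, v) = x) →
      ∀ a ∈ A, (a.1 = v ∨ a.2 = v) → (f a = v ∨ f a = x))
    (x u v : V) (q : List V)
    (hx : f (u, v) = x)
    (hchain : (u :: v :: q).Chain' (fun a b => (a, b) ∈ A))
    (hnosell : ∀ a ∈ arcsOf (u :: v :: q), f a ≠ a.1)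
    (hinternal : x ∉ (v :: q).dropLast) :
    ∀ a ∈ arcsOf (u :: v :: q), f a = x := by
  induction q generalizing u v with
  | nil => simpa [arcsOf] using hx
  | cons w q ih =>
    obtain ⟨huv, hchain'⟩ := List.isChain_cons_cons.mp hchain
    rw [arcsOf_cons_cons] at hnosell ⊢
    have hxv : x ≠ v := fun h => hinternal (by simp [h])
    have hvw : f (v, w) = x :=
      protector_next_arc_eq hA2 huv (List.isChain_cons_cons.mp hchain').1 hx hxv
        (hnosell (v, w) (by simp [arcsOf]))
    have hinternal' : x ∉ (w :: q).dropLast := fun h => hinternal (by simp [h])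
    simpa [hx] using
      ih v w hvw hchain' (fun a ha => hnosell a (List.mem_cons_of_mem _ ha)) hinternal'

/-- Protection propagates forward along seller-unprotected paths avoiding x: if the first
arc is protected by x, every arc of the path is protected by x. -/
theorem stmt13 {V : Type*} [Fintype V] (A : Finset (V × V)) (f : V × V → V)
    (hA2 : ∀ v x : V, x ≠ v → (∃ u, (u, v) ∈ A ∧ f (u, v) = x) →
      ∀ a ∈ A, (a.1 = v ∨ a.2 = v) → (f a = v ∨ f a = x))
    (x u v : V) (q : List V)
    (hx : f (u, v) = x) (hxv : x ≠ v)
    (hchain : (u :: v :: q).Chain' (fun a b => (a, b) ∈ A))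
    (hnosell : ∀ a ∈ arcsOf (u :: v :: q), f a ≠ a.1)
    (hinternal : x ∉ (v :: q).dropLast) :
    ∀ a ∈ arcsOf (u :: v :: q), f a = x :=
  stmt13_general A f hA2 x u v q hx hchain hnosell hinternal
end
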